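/- Let B ⊆ Kⁿ be a ball, Ū ⊆ K̄ⁿ a K̄-subspace of dimension d, and π : Kⁿ → K^d a coordinate projection which is an exhibition of Ū. For q ∈ π(B) write B_q := B ∩ π⁻¹(q). Suppose (α_{q,q'})_{q,q' ∈ π(B)} is a family of risometries α_{q,q'} : B_q → B_{q'} satisfying α_{q',q''} ∘ α_{q,q'} = α_{q,q''} for all q, q', q'' ∈ π(B), and dir(α_{q,q'}(z) − z) ⊆ Ū for all q, q' ∈ π(B) and z ∈ B_q. Then for every δ ∈ π(B) − π(B) (the translate of π(B) containing 0), the map B → B sending x to α_{π(x), π(x)+δ}(x) is a risometry. -/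

import Mathlib

noncomputable section

open scoped Classical Pointwise

section Preamble

variable {K : Type*} [Field K] {Γ : Type*} [LinearOrderedCommGroupWithZero Γ]

instance (priority := 100) : OrderBot Γ where
  bot := 0
  bot_le _ := zero_le'

/-- The max-valuation on `K^n`: `v(a) = maxᵢ v(aᵢ)`. -/
def vv (v : Valuation K Γ) {n : ℕ} (x : Fin n → K) : Γ :=
  Finset.univ.sup fun i => v (x i)

/-- `rvEq v x y` expresses `rv(x) = rv(y)` in `RV⁽ⁿ⁾ = Kⁿ/∼`, where
`x ∼ y` iff `v(x−y) < v(x)` or `x = y = 0`. -/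
def rvEq (v : Valuation K Γ) {n : ℕ} (x y : Fin n → K) : Prop :=
  vv v (x - y) < vv v x ∨ (x = 0 ∧ y = 0)

/-- Balls in `K` (with `K` itself counting as a ball). -/
def IsBall1 (v : Valuation K Γ) (B : Set K) : Prop :=
  B = Set.univ ∨ ∃ a : K, ∃ γ : Γ, γ ≠ 0 ∧
    (B = {x | v (x - a) < γ} ∨ B = {x | v (x - a) ≤ γ})

/-- Balls in `Kⁿ` (with `Kⁿ` itself counting as a ball). -/
def IsBall (v : Valuation K Γ) {n : ℕ} (B : Set (Fin n → K)) : Prop :=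
  B = Set.univ ∨ ∃ a : Fin n → K, ∃ γ : Γ, γ ≠ 0 ∧
    (B = {x | vv v (x - a) < γ} ∨ B = {x | vv v (x - a) ≤ γ})

/-- Spherical completeness: every nonempty chain of balls in `K` has nonempty
intersection. -/
def SphericallyComplete (v : Valuation K Γ) : Prop :=
  ∀ C : Set (Set K), C.Nonempty → (∀ B ∈ C, IsBall1 v B) → IsChain (· ⊆ ·) C →
    (⋂ B ∈ C, B).Nonempty

/-- The residue field `K̄` of the valuation ring `𝒪 = {x | v x ≤ 1}`. -/
def Kbar (v : Valuation K Γ) : Type _ :=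
  IsLocalRing.ResidueField v.valuationSubring

instance (v : Valuation K Γ) : Field (Kbar v) :=
  inferInstanceAs (Field (IsLocalRing.ResidueField v.valuationSubring))

/-- The residue map `res : 𝒪 → K̄`, extended by the junk value `0` outside `𝒪`. -/
def res' (v : Valuation K Γ) (x : K) : Kbar v :=
  if h : v x ≤ 1 then IsLocalRing.residue v.valuationSubring ⟨x, h⟩ else 0

/-- The coordinatewise residue map on `Kⁿ`. -/
def resv (v : Valuation K Γ) {n : ℕ} (x : Fin n → K) : Fin n → Kbar v :=
  fun i => res' v (x i)

/-- `res(S)` for a set `S ⊆ Kⁿ`: the set of residues of points of `S ∩ 𝒪ⁿ`. -/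
def resSet (v : Valuation K Γ) {n : ℕ} (S : Set (Fin n → K)) : Set (Fin n → Kbar v) :=
  resv v '' {x ∈ S | ∀ i, v (x i) ≤ 1}

/-- `dir(x) = res(K·x) ⊆ K̄ⁿ`. -/
def dirSet (v : Valuation K Γ) {n : ℕ} (x : Fin n → K) : Set (Fin n → Kbar v) :=
  resSet v {y | ∃ c : K, y = c • x}

/-- The coordinate projection `Kⁿ → K^d` selecting the coordinates `σ 0 < σ 1 < ⋯`. -/
def proj {A : Type*} {n d : ℕ} (σ : Fin d → Fin n) (x : Fin n → A) : Fin d → A :=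
  fun k => x (σ k)

/-- `σ` (a strictly increasing selection of `d` of the `n` coordinates) is an
exhibition of the `K̄`-subspace `Ū ⊆ K̄ⁿ` if the corresponding coordinate projection
`K̄ⁿ → K̄^d` restricts to an isomorphism from `Ū` onto `K̄^d`. -/
def IsExhibition (v : Valuation K Γ) {n d : ℕ} (σ : Fin d → Fin n)
    (Ubar : Submodule (Kbar v) (Fin n → Kbar v)) : Prop :=
  StrictMono σ ∧ Set.BijOn (proj σ) (Ubar : Set (Fin n → Kbar v)) Set.univ

/-- `affdir(C)`: the `K̄`-subspace of `K̄ⁿ` generated by all `dir(x − x')`, `x, x' ∈ C`. -/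
def affdir (v : Valuation K Γ) {n : ℕ} (C : Set (Fin n → K)) :
    Submodule (Kbar v) (Fin n → Kbar v) :=
  Submodule.span (Kbar v) (⋃ x ∈ C, ⋃ x' ∈ C, dirSet v (x - x'))

/-- A matrix has entries in the valuation ring `𝒪`. -/
def EntriesInO (v : Valuation K Γ) {n : ℕ} (M : Matrix (Fin n) (Fin n) K) : Prop :=
  ∀ i j, v (M i j) ≤ 1

/-- `M ∈ GLₙ(𝒪)`: `M` is invertible, with entries in `𝒪`, and its inverse also has
entries in `𝒪`. -/
def MemGLO (v : Valuation K Γ) {n : ℕ} (M : Matrix (Fin n) (Fin n) K) : Prop :=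
  EntriesInO v M ∧ ∃ N : Matrix (Fin n) (Fin n) K,
    M * N = 1 ∧ N * M = 1 ∧ EntriesInO v N

/-- The entrywise residue matrix of `M`. -/
def resM (v : Valuation K Γ) {n : ℕ} (M : Matrix (Fin n) (Fin n) K) :
    Matrix (Fin n) (Fin n) (Kbar v) :=
  fun i j => res' v (M i j)

/-- `DeltaLE v U W γ` expresses `Δ(U, W) ≤ γ`: for every `u ∈ U` there is `w ∈ W`
with `v(u − w) ≤ v(u)·γ`. -/
def DeltaLE (v : Valuation K Γ) {n : ℕ} (U W : Submodule K (Fin n → K)) (γ : Γ) : Prop :=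
  ∀ u ∈ U, ∃ w ∈ W, vv v (u - w) ≤ vv v u * γ

/-- `IsDelta v U W γ` expresses `Δ(U, W) = γ`: `γ` is the minimum of all admissible
bounds. -/
def IsDelta (v : Valuation K Γ) {n : ℕ} (U W : Submodule K (Fin n → K)) (γ : Γ) : Prop :=
  DeltaLE v U W γ ∧ ∀ δ : Γ, DeltaLE v U W δ → γ ≤ δ

end Preamble

variable {K : Type*} [Field K] {Γ : Type*} [LinearOrderedCommGroupWithZero Γ]


/-!
The shift by `δ` is a bijection of `B` because the shift by `-δ` inverts it: this uses the
cocycle identity, `α q q = id`, and that `π(B)` is closed under `q ↦ q + u - w` for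
`u, w ∈ π(B)`, as `B` is a ball.

For the risometry, transport `x'` into the fiber of `x` as `x'' = α_{q',q}(x')`, so that
`x - x' = (x - x'') + (x'' - x')` with the first summand in `ker π` and the second with direction
in `Ū`; the images decompose in the same way through `y'' = α_{q,q+δ}(x'')`. The first summands
have the same `rv` because `α_{q,q+δ}` is a risometry. Since `π̄` is injective on `Ū`, `π`
preserves the valuation of vectors with direction in `Ū`, and two such vectors with the same
projection have the same `rv`; this applies to the second summands, whose projections are both
`q - q'`. Finally, valuation preservation under `π` rules out cancellation between a vector of
`ker π` and one with direction in `Ū`, so `rv` of the sums agree.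
-/

section MaxValuation

variable (v : Valuation K Γ) {m d : ℕ}

lemma apply_le_vv (x : Fin m → K) (i : Fin m) : v (x i) ≤ vv v x :=
  Finset.le_sup (f := fun i => v (x i)) (Finset.mem_univ i)

lemma vv_le_iff {x : Fin m → K} {γ : Γ} : vv v x ≤ γ ↔ ∀ i, v (x i) ≤ γ := by
  simp [vv, Finset.sup_le_iff]

lemma vv_lt_iff {x : Fin m → K} {γ : Γ} (hγ : 0 < γ) :
    vv v x < γ ↔ ∀ i, v (x i) < γ := by
  simpa [vv] using
    Finset.sup_lt_iff (f := fun i => v (x i)) (s := Finset.univ) (by simpa [bot_eq_zero])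

lemma vv_zero : vv v (0 : Fin m → K) = 0 :=
  le_antisymm ((vv_le_iff v).2 fun i => by simp) zero_le

lemma vv_eq_zero_iff {x : Fin m → K} : vv v x = 0 ↔ x = 0 := by
  refine ⟨fun h => funext fun i => ?_, fun h => h ▸ vv_zero v⟩
  simpa using le_antisymm (h ▸ apply_le_vv v x i : v (x i) ≤ 0) zero_le

lemma vv_add_le (x y : Fin m → K) : vv v (x + y) ≤ max (vv v x) (vv v y) :=
  (vv_le_iff v).2 fun i =>
    (v.map_add _ _).trans (max_le_max (apply_le_vv v x i) (apply_le_vv v y i))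

lemma vv_neg (x : Fin m → K) : vv v (-x) = vv v x := by
  simp [vv]

lemma vv_sub_le (x y : Fin m → K) : vv v (x - y) ≤ max (vv v x) (vv v y) := by
  simpa [sub_eq_add_neg, vv_neg] using vv_add_le v x (-y)

lemma vv_smul (c : K) (x : Fin m → K) : vv v (c • x) = v c * vv v x := by
  simp only [vv, Pi.smul_apply, smul_eq_mul, map_mul]
  exact (Finset.apply_sup_eq_sup_comp_of_linearOrder (v c * ·)
    (fun _ _ h => mul_le_mul_right h _) (by simp [bot_eq_zero])).symm

lemma exists_vv_smul_eq_one {x : Fin m → K} (hx : x ≠ 0) :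
    ∃ c : K, c ≠ 0 ∧ vv v (c • x) = 1 := by
  obtain ⟨i, -, hi⟩ := Finset.exists_mem_eq_sup Finset.univ
    (Finset.univ_nonempty_iff.2 ⟨(Function.ne_iff.1 hx).choose⟩) fun i => v (x i)
  have hvx : vv v x ≠ 0 := mt (vv_eq_zero_iff v).1 hx
  refine ⟨(x i)⁻¹, inv_ne_zero fun h => hvx ?_, ?_⟩
  · rw [vv, hi, h, map_zero]
  · rw [vv_smul, map_inv₀, ← hi, ← vv, inv_mul_cancel₀ hvx]

lemma vv_eq_of_vv_sub_lt {x y : Fin m → K} (h : vv v (x - y) < vv v x) : vv v y = vv v x := by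
  have hy : vv v y ≤ vv v x := by
    simpa [max_eq_left h.le] using vv_sub_le v x (x - y)
  refine le_antisymm hy (le_of_not_gt fun hlt => ?_)
  have := vv_add_le v (x - y) y
  rw [sub_add_cancel] at this
  exact (max_lt h hlt).not_ge this

lemma vv_proj_le (σ : Fin d → Fin m) (x : Fin m → K) : vv v (proj σ x) ≤ vv v x :=
  (vv_le_iff v).2 fun k => apply_le_vv v x (σ k)

lemma vv_extend_zero_le {σ : Fin d → Fin m} (hσ : Function.Injective σ) (q : Fin d → K) :
    vv v (Function.extend σ q 0) ≤ vv v q := by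
  refine (vv_le_iff v).2 fun i => ?_
  by_cases hi : ∃ k, σ k = i
  · obtain ⟨k, rfl⟩ := hi
    rw [hσ.extend_apply]
    exact apply_le_vv v q k
  · simp [Function.extend_apply' _ _ _ hi]

end MaxValuation

section LeadingTerm

variable (v : Valuation K Γ) {m : ℕ}

lemma rvEq_iff {x y : Fin m → K} : rvEq v x y ↔ x = y ∨ vv v (x - y) < vv v x := by
  refine ⟨fun h => h.elim Or.inr fun ⟨hx, hy⟩ => Or.inl (hx.trans hy.symm), ?_⟩
  rintro (rfl | h)
  · by_cases hx : x = 0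
    · exact Or.inr ⟨hx, hx⟩
    · left
      rw [sub_self, vv_zero]
      exact lt_of_le_of_ne zero_le (Ne.symm (mt (vv_eq_zero_iff v).1 hx))
  · exact Or.inl h

variable {v}

lemma rvEq.vv_eq {x y : Fin m → K} (h : rvEq v x y) : vv v x = vv v y := by
  rcases (rvEq_iff v).1 h with rfl | h
  · rfl
  · exact (vv_eq_of_vv_sub_lt v h).symm

lemma rvEq.vv_sub_lt {x y : Fin m → K} {γ : Γ} (h : rvEq v x y) (hx : vv v x ≤ γ)
    (hγ : 0 < γ) : vv v (x - y) < γ := by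
  rcases (rvEq_iff v).1 h with rfl | h
  · rwa [sub_self, vv_zero]
  · exact h.trans_le hx

lemma rvEq.add {a a' b b' : Fin m → K} (ha : rvEq v a a') (hb : rvEq v b b')
    (hab : vv v (a + b) = max (vv v a) (vv v b)) : rvEq v (a + b) (a' + b') := by
  rcases (zero_le : 0 ≤ vv v (a + b)).eq_or_lt with h0 | hpos
  · have hmax : max (vv v a) (vv v b) ≤ 0 := by rw [← hab, ← h0]
    have ha0 : a = 0 :=
      (vv_eq_zero_iff v).1 (le_antisymm ((le_max_left _ _).trans hmax) zero_le)
    have hb0 : b = 0 :=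
      (vv_eq_zero_iff v).1 (le_antisymm ((le_max_right _ _).trans hmax) zero_le)
    have ha'0 : a' = 0 := (vv_eq_zero_iff v).1 (ha.vv_eq ▸ ha0 ▸ vv_zero v)
    have hb'0 : b' = 0 := (vv_eq_zero_iff v).1 (hb.vv_eq ▸ hb0 ▸ vv_zero v)
    exact (rvEq_iff v).2 (Or.inl (by rw [ha0, hb0, ha'0, hb'0]))
  refine (rvEq_iff v).2 (Or.inr ?_)
  rw [add_sub_add_comm]
  exact (vv_add_le v _ _).trans_lt (max_lt
    (ha.vv_sub_lt (hab ▸ le_max_left _ _) hpos) (hb.vv_sub_lt (hab ▸ le_max_right _ _) hpos))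

end LeadingTerm

section Residue

variable (v : Valuation K Γ) {m : ℕ}

lemma res'_of_le_one {x : K} (hx : v x ≤ 1) :
    res' v x = IsLocalRing.residue v.valuationSubring ⟨x, hx⟩ :=
  dif_pos hx

lemma res'_sub {x y : K} (hx : v x ≤ 1) (hy : v y ≤ 1) :
    res' v (x - y) = res' v x - res' v y := by
  have hxy : v (x - y) ≤ 1 := (v.map_sub x y).trans (max_le hx hy)
  rw [res'_of_le_one v hx, res'_of_le_one v hy, res'_of_le_one v hxy]
  exact map_sub (IsLocalRing.residue v.valuationSubring) ⟨x, hx⟩ ⟨y, hy⟩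

lemma res'_eq_zero_iff {x : K} (hx : v x ≤ 1) : res' v x = 0 ↔ v x < 1 := by
  have hx' : x ∈ v.valuationSubring := hx
  have key : IsLocalRing.residue v.valuationSubring ⟨x, hx'⟩ = 0 ↔ v x < 1 := by
    rw [IsLocalRing.residue_eq_zero_iff, IsLocalRing.mem_maximalIdeal, mem_nonunits_iff,
      (Valuation.valuationSubring.integers v).isUnit_iff_valuation_eq_one]
    exact ⟨lt_of_le_of_ne hx, ne_of_lt⟩
  rw [res'_of_le_one v hx]
  exact key

lemma resv_sub {x y : Fin m → K} (hx : vv v x ≤ 1) (hy : vv v y ≤ 1) :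
    resv v (x - y) = resv v x - resv v y :=
  funext fun i => res'_sub v ((apply_le_vv v x i).trans hx) ((apply_le_vv v y i).trans hy)

lemma resv_eq_zero_iff {x : Fin m → K} (hx : vv v x ≤ 1) : resv v x = 0 ↔ vv v x < 1 := by
  rw [vv_lt_iff v zero_lt_one, funext_iff]
  exact forall_congr' fun i => res'_eq_zero_iff v ((apply_le_vv v x i).trans hx)

lemma resv_smul_mem_dirSet {x : Fin m → K} {c : K} (hc : vv v (c • x) ≤ 1) :
    resv v (c • x) ∈ dirSet v x :=
  ⟨c • x, ⟨⟨c, rfl⟩, fun i => (apply_le_vv v _ i).trans hc⟩, rfl⟩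

end Residue

section Exhibition

variable {v : Valuation K Γ} {n d : ℕ} {σ : Fin d → Fin n}
  {Ubar : Submodule (Kbar v) (Fin n → Kbar v)}

lemma proj_add (x y : Fin n → K) : proj σ (x + y) = proj σ x + proj σ y := rfl

lemma proj_sub (x y : Fin n → K) : proj σ (x - y) = proj σ x - proj σ y := rfl

lemma proj_smul (c : K) (x : Fin n → K) : proj σ (c • x) = c • proj σ x := rfl

lemma vv_add_eq_max_of_proj_eq_zero {a b : Fin n → K} (ha : proj σ a = 0)
    (hb : vv v (proj σ b) = vv v b) : vv v (a + b) = max (vv v a) (vv v b) := by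
  have hab : vv v b ≤ vv v (a + b) := by
    calc vv v b = vv v (proj σ (a + b)) := by rw [proj_add, ha, zero_add, hb]
      _ ≤ vv v (a + b) := vv_proj_le v σ _
  have ha' : vv v a ≤ vv v (a + b) := by
    simpa [max_eq_left hab] using vv_sub_le v (a + b) b
  exact le_antisymm (vv_add_le v a b) (max_le ha' hab)

lemma dirSet_sub_subset {b b' : Fin n → K} (hb : dirSet v b ⊆ ↑Ubar)
    (hb' : dirSet v b' ⊆ ↑Ubar)
    (hle : max (vv v b) (vv v b') ≤ vv v (b - b')) :
    dirSet v (b - b') ⊆ ↑Ubar := by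
  rintro _ ⟨_, ⟨⟨c, rfl⟩, hc⟩, rfl⟩
  -- `hle` makes `c • b` and `c • b'` integral as soon as `c • (b - b')` is.
  have hcb : vv v (c • (b - b')) ≤ 1 := (vv_le_iff v).2 hc
  have hle' (e : Fin n → K) (he : vv v e ≤ vv v (b - b')) : vv v (c • e) ≤ 1 := by
    rw [vv_smul] at hcb ⊢
    exact (mul_le_mul_right he _).trans hcb
  have h₁ := hle' b ((le_max_left _ _).trans hle)
  have h₂ := hle' b' ((le_max_right _ _).trans hle)
  rw [smul_sub, resv_sub v h₁ h₂]
  exact Ubar.sub_mem (hb (resv_smul_mem_dirSet v h₁)) (hb' (resv_smul_mem_dirSet v h₂))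

namespace IsExhibition

lemma vv_proj_eq (hσ : IsExhibition v σ Ubar) {u : Fin n → K}
    (hu : dirSet v u ⊆ ↑Ubar) : vv v (proj σ u) = vv v u := by
  rcases eq_or_ne u 0 with rfl | hu0
  · exact (vv_zero v).trans (vv_zero v).symm
  obtain ⟨c, hc, hcu⟩ := exists_vv_smul_eq_one v hu0
  have hres : resv v (c • u) ∈ Ubar := hu (resv_smul_mem_dirSet v hcu.le)
  have hproj : vv v (proj σ (c • u)) = 1 := by
    refine le_antisymm (hcu ▸ vv_proj_le v σ _) (not_lt.1 fun hlt => ?_)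
    have hzero : proj σ (resv v (c • u)) = proj σ 0 :=
      (resv_eq_zero_iff v ((vv_proj_le v σ _).trans hcu.le)).2 hlt
    exact ((resv_eq_zero_iff v hcu.le).1 (hσ.2.injOn hres Ubar.zero_mem hzero)).ne hcu
  rw [proj_smul, vv_smul] at hproj
  rw [vv_smul] at hcu
  exact mul_left_cancel₀ ((map_ne_zero v).2 hc) (hproj.trans hcu.symm)

lemma rvEq_of_proj_eq (hσ : IsExhibition v σ Ubar) {b b' : Fin n → K}
    (hb : dirSet v b ⊆ ↑Ubar) (hb' : dirSet v b' ⊆ ↑Ubar) (hp : proj σ b = proj σ b') :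
    rvEq v b b' := by
  refine (rvEq_iff v).2 (or_iff_not_imp_right.2 fun hge => ?_)
  have hvv : vv v b' = vv v b := by rw [← hσ.vv_proj_eq hb', ← hp, hσ.vv_proj_eq hb]
  have hdir := dirSet_sub_subset hb hb' (by rw [hvv, max_self]; exact not_lt.1 hge)
  have h0 := hσ.vv_proj_eq hdir
  rwa [proj_sub, hp, sub_self, vv_zero, eq_comm, vv_eq_zero_iff, sub_eq_zero] at h0

lemma rvEq_add (hσ : IsExhibition v σ Ubar) {a a' b b' : Fin n → K} (ha : rvEq v a' a)
    (ha' : proj σ a' = 0) (hb : dirSet v b ⊆ ↑Ubar) (hb' : dirSet v b' ⊆ ↑Ubar)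
    (hp : proj σ b' = proj σ b) :
    rvEq v (a' + b') (a + b) :=
  ha.add (hσ.rvEq_of_proj_eq hb' hb hp) (vv_add_eq_max_of_proj_eq_zero ha' (hσ.vv_proj_eq hb'))

end IsExhibition

end Exhibition

section Ball

variable {v : Valuation K Γ} {n d : ℕ} {B : Set (Fin n → K)}

lemma IsBall.add_mem (hB : IsBall v B) {x y z w : Fin n → K} (hx : x ∈ B) (hy : y ∈ B)
    (hz : z ∈ B) (hw : vv v w ≤ vv v (y - z)) : x + w ∈ B := by
  have hbound (a : Fin n → K) :
      vv v (x + w - a) ≤ max (vv v (x - a)) (max (vv v (y - a)) (vv v (z - a))) :=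
    calc vv v (x + w - a) = vv v ((x - a) + w) := by rw [sub_add_eq_add_sub]
      _ ≤ max (vv v (x - a)) (vv v w) := vv_add_le v _ _
      _ ≤ _ := max_le_max le_rfl <| hw.trans <| by
          rw [← sub_sub_sub_cancel_right y z a]
          exact vv_sub_le v _ _
  rcases hB with rfl | ⟨a, γ, -, rfl | rfl⟩
  · trivial
  · exact (hbound a).trans_lt (max_lt hx (max_lt hy hz))
  · exact (hbound a).trans (max_le hx (max_le hy hz))

lemma IsBall.add_sub_mem_image_proj (hB : IsBall v B) {σ : Fin d → Fin n}
    (hσ : Function.Injective σ) {q u w : Fin d → K} (hq : q ∈ proj σ '' B)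
    (hu : u ∈ proj σ '' B) (hw : w ∈ proj σ '' B) : q + (u - w) ∈ proj σ '' B := by
  obtain ⟨x, hx, rfl⟩ := hq
  obtain ⟨y, hy, rfl⟩ := hu
  obtain ⟨z, hz, rfl⟩ := hw
  refine ⟨x + Function.extend σ (proj σ (y - z)) 0, hB.add_mem hx hy hz ?_, ?_⟩
  · exact (vv_extend_zero_le v hσ _).trans (vv_proj_le v σ _)
  · funext k
    simp [proj, hσ.extend_apply]

end Ball

section FiberCocycle

variable {X Q : Type*}

structure IsFiberCocycle (p : X → Q) (B : Set X) (α : Q → Q → X → X) : Prop where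
  bijOn : ∀ q ∈ p '' B, ∀ q' ∈ p '' B,
    Set.BijOn (α q q') (B ∩ {x | p x = q}) (B ∩ {x | p x = q'})
  comp : ∀ q ∈ p '' B, ∀ q' ∈ p '' B, ∀ q'' ∈ p '' B,
    ∀ z ∈ B ∩ {x | p x = q}, α q' q'' (α q q' z) = α q q'' z

def fiberShift [Add Q] (p : X → Q) (α : Q → Q → X → X) (δ : Q) (x : X) : X :=
  α (p x) (p x + δ) x

namespace IsFiberCocycle

variable {p : X → Q} {B : Set X} {α : Q → Q → X → X}

lemma apply_self (h : IsFiberCocycle p B α) {q : Q} (hq : q ∈ p '' B) {z : X}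
    (hz : z ∈ B ∩ {x | p x = q}) : α q q z = z :=
  (h.bijOn q hq q hq).injOn ((h.bijOn q hq q hq).mapsTo hz) hz (h.comp q hq q hq q hq z hz)

variable [AddGroup Q] {δ : Q}

lemma fiberShift_mem (h : IsFiberCocycle p B α) (hδ : ∀ q ∈ p '' B, q + δ ∈ p '' B) {x : X}
    (hx : x ∈ B) : fiberShift p α δ x ∈ B ∩ {y | p y = p x + δ} :=
  (h.bijOn _ ⟨x, hx, rfl⟩ _ (hδ _ ⟨x, hx, rfl⟩)).mapsTo ⟨hx, rfl⟩

lemma fiberShift_neg_fiberShift (h : IsFiberCocycle p B α)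
    (hδ : ∀ q ∈ p '' B, q + δ ∈ p '' B) {x : X} (hx : x ∈ B) :
    fiberShift p α (-δ) (fiberShift p α δ x) = x := by
  have hq : p x ∈ p '' B := ⟨x, hx, rfl⟩
  rw [fiberShift, (h.fiberShift_mem hδ hx).2, add_neg_cancel_right, fiberShift,
    h.comp _ hq _ (hδ _ hq) _ hq x ⟨hx, rfl⟩, h.apply_self hq ⟨hx, rfl⟩]

lemma bijOn_fiberShift (h : IsFiberCocycle p B α) (hδ : ∀ q ∈ p '' B, q + δ ∈ p '' B)
    (hδ' : ∀ q ∈ p '' B, q + -δ ∈ p '' B) : Set.BijOn (fiberShift p α δ) B B := by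
  refine Set.InvOn.bijOn (f' := fiberShift p α (-δ))
    ⟨fun x hx => h.fiberShift_neg_fiberShift hδ hx, fun y hy => ?_⟩
    (fun x hx => (h.fiberShift_mem hδ hx).1) (fun y hy => (h.fiberShift_mem hδ' hy).1)
  simpa using h.fiberShift_neg_fiberShift hδ' hy

end IsFiberCocycle

end FiberCocycle

lemma IsFiberCocycle.rvEq_fiberShift {v : Valuation K Γ} {n d : ℕ} {B : Set (Fin n → K)}
    {Ubar : Submodule (Kbar v) (Fin n → Kbar v)} {σ : Fin d → Fin n}
    {α : (Fin d → K) → (Fin d → K) → (Fin n → K) → (Fin n → K)} {δ : Fin d → K}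
    (hσ : IsExhibition v σ Ubar) (h : IsFiberCocycle (proj σ) B α)
    (hriso : ∀ q ∈ proj σ '' B, ∀ q' ∈ proj σ '' B,
      ∀ z ∈ B ∩ {x | proj σ x = q}, ∀ z' ∈ B ∩ {x | proj σ x = q},
        rvEq v (α q q' z - α q q' z') (z - z'))
    (hdir : ∀ q ∈ proj σ '' B, ∀ q' ∈ proj σ '' B, ∀ z ∈ B ∩ {x | proj σ x = q},
      dirSet v (α q q' z - z) ⊆ ↑Ubar)
    (hδ : ∀ q ∈ proj σ '' B, q + δ ∈ proj σ '' B) {x x' : Fin n → K} (hx : x ∈ B)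
    (hx' : x' ∈ B) :
    rvEq v (fiberShift (proj σ) α δ x - fiberShift (proj σ) α δ x') (x - x') := by
  set q := proj σ x
  set q' := proj σ x'
  have hq : q ∈ proj σ '' B := ⟨x, hx, rfl⟩
  have hq' : q' ∈ proj σ '' B := ⟨x', hx', rfl⟩
  set x'' := α q' q x'
  have hx'' : x'' ∈ B ∩ {z | proj σ z = q} := (h.bijOn q' hq' q hq).mapsTo ⟨hx', rfl⟩
  set y := fiberShift (proj σ) α δ x
  set y' := fiberShift (proj σ) α δ x'
  set y'' := α q (q + δ) x''
  have hy : y ∈ B ∩ {z | proj σ z = q + δ} := h.fiberShift_mem hδ hx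
  have hy' : y' ∈ B ∩ {z | proj σ z = q' + δ} := h.fiberShift_mem hδ hx'
  have hy'' : y'' ∈ B ∩ {z | proj σ z = q + δ} := (h.bijOn q hq _ (hδ q hq)).mapsTo hx''
  have hy''_eq : y'' = α (q' + δ) (q + δ) y' := by
    change α q (q + δ) (α q' q x') = α (q' + δ) (q + δ) (α q' (q' + δ) x')
    rw [h.comp _ hq' _ (hδ q' hq') _ (hδ q hq) x' ⟨hx', rfl⟩,
      ← h.comp _ hq' _ hq _ (hδ q hq) x' ⟨hx', rfl⟩]
  have key := hσ.rvEq_add (a := x - x'') (a' := y - y'') (b := x'' - x') (b' := y'' - y')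
    (hriso q hq _ (hδ q hq) x ⟨hx, rfl⟩ x'' hx'')
    (by rw [proj_sub, hy.2, hy''.2, sub_self])
    (hdir q' hq' q hq x' ⟨hx', rfl⟩)
    (hy''_eq ▸ hdir _ (hδ q' hq') _ (hδ q hq) y' hy')
    (by rw [proj_sub, proj_sub, hy''.2, hy'.2, hx''.2, add_sub_add_right_eq_sub])
  rwa [sub_add_sub_cancel, sub_add_sub_cancel] at key

theorem translater_shift_is_risometry_general
    (v : Valuation K Γ) {n d : ℕ}
    (B : Set (Fin n → K)) (hB : IsBall v B)
    (Ubar : Submodule (Kbar v) (Fin n → Kbar v))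
    (σ : Fin d → Fin n) (hσ : IsExhibition v σ Ubar)
    (α : (Fin d → K) → (Fin d → K) → (Fin n → K) → (Fin n → K))
    (hαbij : ∀ q ∈ proj σ '' B, ∀ q' ∈ proj σ '' B,
      Set.BijOn (α q q') (B ∩ {x | proj σ x = q}) (B ∩ {x | proj σ x = q'}))
    (hαriso : ∀ q ∈ proj σ '' B, ∀ q' ∈ proj σ '' B,
      ∀ z ∈ B ∩ {x | proj σ x = q}, ∀ z' ∈ B ∩ {x | proj σ x = q},
        rvEq v (α q q' z - α q q' z') (z - z'))
    (hαcoc : ∀ q ∈ proj σ '' B, ∀ q' ∈ proj σ '' B, ∀ q'' ∈ proj σ '' B,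
      ∀ z ∈ B ∩ {x | proj σ x = q}, α q' q'' (α q q' z) = α q q'' z)
    (hαdir : ∀ q ∈ proj σ '' B, ∀ q' ∈ proj σ '' B, ∀ z ∈ B ∩ {x | proj σ x = q},
      dirSet v (α q q' z - z) ⊆ (Ubar : Set (Fin n → Kbar v)))
    (δ : Fin d → K) (hδ : ∃ u ∈ proj σ '' B, ∃ w ∈ proj σ '' B, δ = u - w) :
    Set.BijOn (fun x => α (proj σ x) (proj σ x + δ) x) B B ∧
    ∀ x ∈ B, ∀ x' ∈ B,
      rvEq v (α (proj σ x) (proj σ x + δ) x - α (proj σ x') (proj σ x' + δ) x')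
        (x - x') := by
  obtain ⟨u, hu, w, hw, rfl⟩ := hδ
  have hα : IsFiberCocycle (proj σ) B α := ⟨hαbij, hαcoc⟩
  have hadd : ∀ q ∈ proj σ '' B, q + (u - w) ∈ proj σ '' B := fun q hq =>
    hB.add_sub_mem_image_proj hσ.1.injective hq hu hw
  have hneg : ∀ q ∈ proj σ '' B, q + -(u - w) ∈ proj σ '' B := fun q hq => by
    simpa only [neg_sub] using hB.add_sub_mem_image_proj hσ.1.injective hq hw hu
  exact ⟨hα.bijOn_fiberShift hadd hneg,
    fun x hx x' hx' => hα.rvEq_fiberShift hσ hαriso hαdir hadd hx hx'⟩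

/-- a family of risometries between the fibers of an exhibition,
compatible with composition and moving only in directions inside `Ū`, induces a
risometry of the ball `B` by a fixed shift `δ` of the base point. -/
theorem translater_shift_is_risometry
    (v : Valuation K Γ) {n d : ℕ}
    (B : Set (Fin n → K)) (hB : IsBall v B)
    (Ubar : Submodule (Kbar v) (Fin n → Kbar v))
    (hdim : Module.finrank (Kbar v) Ubar = d)
    (σ : Fin d → Fin n) (hσ : IsExhibition v σ Ubar)
    (α : (Fin d → K) → (Fin d → K) → (Fin n → K) → (Fin n → K))
    (hαbij : ∀ q ∈ proj σ '' B, ∀ q' ∈ proj σ '' B,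
      Set.BijOn (α q q') (B ∩ {x | proj σ x = q}) (B ∩ {x | proj σ x = q'}))
    (hαriso : ∀ q ∈ proj σ '' B, ∀ q' ∈ proj σ '' B,
      ∀ z ∈ B ∩ {x | proj σ x = q}, ∀ z' ∈ B ∩ {x | proj σ x = q},
        rvEq v (α q q' z - α q q' z') (z - z'))
    (hαcoc : ∀ q ∈ proj σ '' B, ∀ q' ∈ proj σ '' B, ∀ q'' ∈ proj σ '' B,
      ∀ z ∈ B ∩ {x | proj σ x = q}, α q' q'' (α q q' z) = α q q'' z)
    (hαdir : ∀ q ∈ proj σ '' B, ∀ q' ∈ proj σ '' B, ∀ z ∈ B ∩ {x | proj σ x = q},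
      dirSet v (α q q' z - z) ⊆ (Ubar : Set (Fin n → Kbar v)))
    (δ : Fin d → K) (hδ : ∃ u ∈ proj σ '' B, ∃ w ∈ proj σ '' B, δ = u - w) :
    Set.BijOn (fun x => α (proj σ x) (proj σ x + δ) x) B B ∧
    ∀ x ∈ B, ∀ x' ∈ B,
      rvEq v (α (proj σ x) (proj σ x + δ) x - α (proj σ x') (proj σ x' + δ) x')
        (x - x') :=
  translater_shift_is_risometry_general v B hB Ubar σ hσ α hαbij hαriso hαcoc hαdir δ hδ
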